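/- arXiv:2202.09055 — 2 statements merged into one kernel-verified Lean document; each statement's English description precedes it below -/
import Mathlib

section
/- For every ρ ∈ (5/4, 2) there exists a constant C = C(ρ,T) > 0 such that for all x ∈ [0,π] and all 0 ≤ s < t ≤ T, ∫_s^t ∫_0^π |ΔG_{t−r}(x,z)| dz dr ≤ C (t−s)^{1−ρ/2}. -/
/-- `φ_j(x) = √(2/π)·sin(jx)`. -/
noncomputable def phi (j : ℕ) (x : ℝ) : ℝ := Real.sqrt (2 / Real.pi) * Real.sin (j * x)

/-- `ΔG_t(x,y) = Σ_{j=1}^∞ (−j²) e^{−j⁴t} φ_j(x) φ_j(y)`, the Laplacian (in the first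
spatial variable) of the Green function of `∂_t + Δ²` on `(0,π)` with DBCs. -/
noncomputable def DG (t x y : ℝ) : ℝ :=
  ∑' j : ℕ, -(((j : ℝ) + 1) ^ 2) * Real.exp (-((j : ℝ) + 1) ^ 4 * t)
    * phi (j + 1) x * phi (j + 1) y

/-!
For fixed `u > 0` and `x`, `z ↦ ΔG_u(x,z)` is an absolutely convergent sine series with
coefficients `d_j = -j² e^{-j⁴u} φ_j(x)`. Cauchy–Schwarz and Parseval give
`(∫_0^π |ΔG_u(x,z)| dz)² ≤ π Σ d_j² ≤ 2 Σ j⁴ e^{-j⁴u}`, and `e^{-a} ≤ K_ρ a^{-ρ}` bounds this by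
`2 K_ρ u^{-ρ} Σ j^{4-4ρ}`, a convergent series exactly when `ρ > 5/4`. Thus
`∫_0^π |ΔG_{t-r}(x,z)| dz ≤ A (t-r)^{-ρ/2}`, which is integrable over `r ∈ (s,t)` since `ρ < 2`,
with integral `A (t-s)^{1-ρ/2} / (1 - ρ/2)`.
-/

open MeasureTheory Set Real Filter
open scoped Nat

lemma sq_integral_abs_le_mul_integral_sq {α : Type*} [MeasurableSpace α] {μ : Measure α}
    [IsFiniteMeasure μ] {f : α → ℝ} (hf : MemLp f 2 μ) :
    (∫ a, |f a| ∂μ) ^ 2 ≤ μ.real univ * ∫ a, f a ^ 2 ∂μ := by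
  have hf_abs : Integrable (fun a => |f a|) μ := (hf.integrable one_le_two).abs
  have hquad : ∀ c : ℝ,
      0 ≤ μ.real univ * (c * c) + (-2 * ∫ a, |f a| ∂μ) * c + ∫ a, f a ^ 2 ∂μ := by
    intro c
    have hexpand : ∀ a, (c - |f a|) ^ 2 = (c * c - 2 * c * |f a|) + f a ^ 2 := fun a => by
      rw [sub_sq, sq_abs]; ring
    calc 0 ≤ ∫ a, (c - |f a|) ^ 2 ∂μ := integral_nonneg fun a => sq_nonneg _
      _ = _ := by
        simp_rw [hexpand]
        have hlin : Integrable (fun a => c * c - 2 * c * |f a|) μ :=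
          (integrable_const _).sub (hf_abs.const_mul _)
        rw [integral_add hlin hf.integrable_sq,
          integral_sub (integrable_const _) (hf_abs.const_mul _), integral_const,
          integral_const_mul, smul_eq_mul]
        ring
  have hdiscrim := discrim_le_zero hquad
  rw [discrim] at hdiscrim
  nlinarith

section OrthonormalSeries

variable {α : Type*} {e : ℕ → α → ℝ} {B : ℝ} {d : ℕ → ℝ}

lemma summable_mul_of_abs_le (hB : ∀ j a, |e j a| ≤ B) (hd : Summable fun j => |d j|)
    (a : α) : Summable fun j => d j * e j a :=
  Summable.of_norm_bounded (hd.mul_right B) fun j => by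
    rw [norm_mul, Real.norm_eq_abs, Real.norm_eq_abs]
    exact mul_le_mul_of_nonneg_left (hB j a) (abs_nonneg _)

lemma abs_tsum_mul_le (hB : ∀ j a, |e j a| ≤ B) (hd : Summable fun j => |d j|) (a : α) :
    |∑' j, d j * e j a| ≤ (∑' j, |d j|) * B := by
  rw [← tsum_mul_right]
  refine (norm_tsum_le_tsum_norm (summable_mul_of_abs_le hB hd a).norm).trans
    ((summable_mul_of_abs_le hB hd a).norm.tsum_le_tsum (fun j => ?_) (hd.mul_right B))
  rw [norm_mul, Real.norm_eq_abs, Real.norm_eq_abs]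
  exact mul_le_mul_of_nonneg_left (hB j a) (abs_nonneg _)

variable [MeasurableSpace α] {μ : Measure α} [IsFiniteMeasure μ]

lemma memLp_tsum_mul (he : ∀ j, AEStronglyMeasurable (e j) μ) (hB : ∀ j a, |e j a| ≤ B)
    (hd : Summable fun j => |d j|) (p : ENNReal) : MemLp (fun a => ∑' j, d j * e j a) p μ := by
  have hmeas : AEStronglyMeasurable (fun a => ∑' j, d j * e j a) μ :=
    aestronglyMeasurable_of_tendsto_ae atTop
      (fun n => Finset.aestronglyMeasurable_fun_sum _ fun j _ => (he j).const_mul (d j))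
      (ae_of_all _ fun a => (summable_mul_of_abs_le hB hd a).hasSum.tendsto_sum_nat)
  exact MemLp.of_bound hmeas _ (ae_of_all _ fun a => abs_tsum_mul_le hB hd a)

lemma integral_mul_tsum_mul {g : α → ℝ} {M : ℝ} (hg : AEStronglyMeasurable g μ)
    (hgM : ∀ a, |g a| ≤ M) (he : ∀ j, AEStronglyMeasurable (e j) μ)
    (hB : ∀ j a, |e j a| ≤ B) (hd : Summable fun j => |d j|) :
    ∫ a, g a * ∑' j, d j * e j a ∂μ = ∑' j, d j * ∫ a, g a * e j a ∂μ := by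
  have hterm : ∀ j a, ‖g a * (d j * e j a)‖ ≤ M * (|d j| * B) := fun j a => by
    rw [Real.norm_eq_abs, abs_mul, abs_mul]
    exact mul_le_mul (hgM a) (mul_le_mul_of_nonneg_left (hB j a) (abs_nonneg _))
      (by positivity) ((abs_nonneg _).trans (hgM a))
  have hint : ∀ j, Integrable (fun a => g a * (d j * e j a)) μ := fun j =>
    Integrable.of_bound (hg.mul ((he j).const_mul (d j))) _ (ae_of_all _ (hterm j))
  have hsum : Summable fun j => ∫ a, ‖g a * (d j * e j a)‖ ∂μ := by
    refine Summable.of_nonneg_of_le (fun j => integral_nonneg fun a => norm_nonneg _)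
      (fun j => ?_) (((hd.mul_right B).mul_left M).mul_right (μ.real univ))
    refine (le_abs_self _).trans ?_
    simpa only [Real.norm_eq_abs, norm_norm] using
      norm_integral_le_of_norm_le_const (μ := μ)
        (ae_of_all _ fun a => (norm_norm _).trans_le (hterm j a))
  simp_rw [← tsum_mul_left, ← integral_tsum_of_summable_integral_norm hint hsum,
    mul_left_comm _ (d _), integral_const_mul]

lemma integral_mul_tsum_mul_of_orthonormal (he : ∀ j, AEStronglyMeasurable (e j) μ)
    (hB : ∀ j a, |e j a| ≤ B) (horth : ∀ i j, ∫ a, e i a * e j a ∂μ = if i = j then 1 else 0)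
    (hd : Summable fun j => |d j|) (i : ℕ) :
    ∫ a, e i a * ∑' j, d j * e j a ∂μ = d i := by
  rw [integral_mul_tsum_mul (he i) (hB i) he hB hd]
  simp_rw [horth, mul_ite, mul_one, mul_zero]
  rw [tsum_eq_single i fun j hj => if_neg (Ne.symm hj), if_pos rfl]

lemma integral_sq_tsum_mul_of_orthonormal (he : ∀ j, AEStronglyMeasurable (e j) μ)
    (hB : ∀ j a, |e j a| ≤ B) (horth : ∀ i j, ∫ a, e i a * e j a ∂μ = if i = j then 1 else 0)
    (hd : Summable fun j => |d j|) :
    ∫ a, (∑' j, d j * e j a) ^ 2 ∂μ = ∑' j, d j ^ 2 := by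
  simp_rw [sq]
  rw [integral_mul_tsum_mul (memLp_tsum_mul he hB hd ⊤).aestronglyMeasurable
    (abs_tsum_mul_le hB hd) he hB hd]
  refine tsum_congr fun j => ?_
  simp_rw [mul_comm (∑' k, d k * e k _) (e j _),
    integral_mul_tsum_mul_of_orthonormal he hB horth hd j]

end OrthonormalSeries

lemma rpow_le_mul_exp {a ρ : ℝ} (ha : 0 ≤ a) (hρ : 0 ≤ ρ) :
    a ^ ρ ≤ (1 + (⌈ρ⌉₊)!) * exp a := by
  have hpow : a ^ ρ ≤ 1 + a ^ ⌈ρ⌉₊ := by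
    rcases le_total a 1 with h | h
    · linarith [rpow_le_one ha h hρ, pow_nonneg ha ⌈ρ⌉₊]
    · calc a ^ ρ ≤ a ^ (⌈ρ⌉₊ : ℝ) := rpow_le_rpow_of_exponent_le h (Nat.le_ceil ρ)
        _ ≤ 1 + a ^ ⌈ρ⌉₊ := by rw [rpow_natCast]; linarith
  have hfact : a ^ ⌈ρ⌉₊ ≤ (⌈ρ⌉₊)! * exp a := by
    have := pow_div_factorial_le_exp a ha ⌈ρ⌉₊
    rwa [div_le_iff₀ (by positivity), mul_comm] at this
  nlinarith [one_le_exp ha]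

lemma pow_mul_exp_neg_le {m u ρ : ℝ} (hm : 0 < m) (hu : 0 < u) (hρ : 0 ≤ ρ) (k : ℕ) :
    m ^ k * exp (-m ^ 4 * u) ≤ (1 + ((⌈ρ⌉₊)! : ℝ)) * u ^ (-ρ) * m ^ ((k : ℝ) - 4 * ρ) := by
  have ha : 0 < m ^ 4 * u := by positivity
  have hexp : exp (-m ^ 4 * u) ≤ (1 + ((⌈ρ⌉₊)! : ℝ)) * (m ^ 4 * u) ^ (-ρ) := by
    rw [neg_mul, exp_neg, rpow_neg ha.le, ← div_eq_mul_inv, le_div_iff₀ (by positivity),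
      inv_mul_le_iff₀ (exp_pos _), mul_comm (exp _)]
    exact rpow_le_mul_exp ha.le hρ
  have hsplit : m ^ k * (m ^ 4 * u) ^ (-ρ) = u ^ (-ρ) * m ^ ((k : ℝ) - 4 * ρ) := by
    rw [mul_rpow (by positivity) hu.le, ← rpow_natCast m 4, ← rpow_mul hm.le, ← rpow_natCast,
      ← mul_assoc, ← rpow_add hm, mul_comm]
    congr 2
    push_cast
    ring
  calc m ^ k * exp (-m ^ 4 * u) ≤ m ^ k * ((1 + ((⌈ρ⌉₊)! : ℝ)) * (m ^ 4 * u) ^ (-ρ)) := by gcongr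
    _ = _ := by rw [mul_left_comm, hsplit, mul_assoc]

lemma summable_nat_add_one_rpow {q : ℝ} (hq : q < -1) :
    Summable fun j : ℕ => ((j : ℝ) + 1) ^ q := by
  simpa only [Nat.cast_add, Nat.cast_one] using
    (summable_nat_add_iff 1).mpr (Real.summable_nat_rpow.mpr hq)

lemma intervalIntegral_le_of_le_rpow_sub {g : ℝ → ℝ} {s t A β : ℝ} (hst : s ≤ t)
    (hA : 0 ≤ A) (hβ : β < 1) (hg : ∀ r ∈ Ioo s t, g r ≤ A * (t - r) ^ (-β)) :
    ∫ r in s..t, g r ≤ A / (1 - β) * (t - s) ^ (1 - β) := by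
  have hβ' : 0 < 1 - β := by linarith
  by_cases hint : IntervalIntegrable g volume s t
  swap
  · rw [intervalIntegral.integral_undef hint]
    positivity
  have hbound_int : IntervalIntegrable (fun r => A * (t - r) ^ (-β)) volume s t := by
    have := (intervalIntegral.intervalIntegrable_rpow' (r := -β) (by linarith)).comp_sub_left
      (a := t - s) (b := t - t) t
    simp only [sub_sub_cancel, sub_self, sub_zero] at this
    exact this.const_mul A
  have hvalue : ∫ r in s..t, A * (t - r) ^ (-β) = A / (1 - β) * (t - s) ^ (1 - β) := by
    rw [intervalIntegral.integral_const_mul,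
      intervalIntegral.integral_comp_sub_left (fun y => y ^ (-β)) t, sub_self,
      integral_rpow (Or.inl (by linarith)), zero_rpow (by linarith), neg_add_eq_sub]
    field_simp
    ring
  rw [← hvalue, intervalIntegral.integral_of_le hst, intervalIntegral.integral_of_le hst,
    integral_Ioc_eq_integral_Ioo, integral_Ioc_eq_integral_Ioo]
  exact setIntegral_mono_on (hint.1.mono_set Ioo_subset_Ioc_self)
    (hbound_int.1.mono_set Ioo_subset_Ioc_self) measurableSet_Ioo hg

lemma continuous_phi (j : ℕ) : Continuous (phi j) := by
  unfold phi
  fun_prop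

lemma abs_phi_le (j : ℕ) (x : ℝ) : |phi j x| ≤ √(2 / π) := by
  rw [phi, abs_mul, abs_of_nonneg (sqrt_nonneg _)]
  exact mul_le_of_le_one_right (sqrt_nonneg _) (abs_sin_le_one _)

lemma sq_phi_le (j : ℕ) (x : ℝ) : phi j x ^ 2 ≤ 2 / π := by
  rw [← sq_abs, ← sq_sqrt (by positivity : (0 : ℝ) ≤ 2 / π)]
  exact pow_le_pow_left₀ (abs_nonneg _) (abs_phi_le j x) 2

lemma integral_cos_intCast_mul (n : ℤ) :
    ∫ z in (0 : ℝ)..π, cos (n * z) = if n = 0 then π else 0 := by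
  split_ifs with hn
  · simp [hn]
  · rw [intervalIntegral.integral_comp_mul_left (fun y => cos y) (Int.cast_ne_zero.mpr hn)]
    simp [sin_int_mul_pi]

lemma integral_phi_succ_mul_phi_succ (i j : ℕ) :
    ∫ z in (0 : ℝ)..π, phi (i + 1) z * phi (j + 1) z = if i = j then 1 else 0 := by
  set a := i + 1
  set b := j + 1
  have hprod : ∀ z, phi a z * phi b z
      = π⁻¹ * (cos (((a - b : ℤ) : ℝ) * z) - cos (((a + b : ℤ) : ℝ) * z)) := fun z => by
    have hs : √(2 / π) * √(2 / π) = 2 / π := mul_self_sqrt (by positivity)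
    push_cast
    rw [sub_mul, add_mul, cos_sub, cos_add]
    unfold phi
    linear_combination (sin (a * z) * sin (b * z)) * hs
  simp_rw [hprod]
  rw [intervalIntegral.integral_const_mul, intervalIntegral.integral_sub
    ((show Continuous fun z : ℝ => cos (((a - b : ℤ) : ℝ) * z) by fun_prop).intervalIntegrable _ _)
    ((show Continuous fun z : ℝ => cos (((a + b : ℤ) : ℝ) * z) by fun_prop).intervalIntegrable _ _),
    integral_cos_intCast_mul, integral_cos_intCast_mul,
    if_neg (show (a + b : ℤ) ≠ 0 by omega), sub_zero]
  by_cases hab : i = j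
  · rw [if_pos (show (a - b : ℤ) = 0 by omega), if_pos hab, inv_mul_cancel₀ pi_ne_zero]
  · rw [if_neg (show (a - b : ℤ) ≠ 0 by omega), if_neg hab, mul_zero]

noncomputable def dgCoeff (u x : ℝ) (j : ℕ) : ℝ :=
  -(((j : ℝ) + 1) ^ 2) * exp (-((j : ℝ) + 1) ^ 4 * u) * phi (j + 1) x

lemma DG_eq_tsum (u x z : ℝ) : DG u x z = ∑' j, dgCoeff u x j * phi (j + 1) z := rfl

lemma summable_abs_dgCoeff {u : ℝ} (hu : 0 < u) (x : ℝ) :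
    Summable fun j => |dgCoeff u x j| := by
  -- the case `ρ = 1` of `pow_mul_exp_neg_le` gives `|d_j| ≲ u⁻¹ (j + 1)⁻²`
  refine Summable.of_nonneg_of_le (fun j => abs_nonneg _) (fun j => ?_)
    (((summable_nat_add_one_rpow (q := ((2 : ℕ) : ℝ) - 4 * 1) (by norm_num)).mul_left
      ((1 + ((⌈(1 : ℝ)⌉₊)! : ℝ)) * u ^ (-1 : ℝ))).mul_left √(2 / π))
  have hcoef := pow_mul_exp_neg_le (m := (j : ℝ) + 1) (by positivity) hu zero_le_one 2
  rw [dgCoeff, abs_mul, abs_mul, abs_neg, abs_of_pos (exp_pos _), abs_of_nonneg (by positivity),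
    mul_comm]
  exact mul_le_mul (abs_phi_le _ _) hcoef (by positivity) (sqrt_nonneg _)

lemma sq_dgCoeff_le {u ρ : ℝ} (hu : 0 < u) (hρ : 0 ≤ ρ) (x : ℝ) (j : ℕ) :
    dgCoeff u x j ^ 2
      ≤ 2 / π * ((1 + ((⌈ρ⌉₊)! : ℝ)) * u ^ (-ρ) * ((j : ℝ) + 1) ^ (4 - 4 * ρ)) := by
  set m : ℝ := (j : ℝ) + 1
  have hm : 0 < m := by positivity
  have hcoef := pow_mul_exp_neg_le hm hu hρ 4
  have hdecay : (m ^ 2 * exp (-m ^ 4 * u)) ^ 2 ≤ m ^ 4 * exp (-m ^ 4 * u) := by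
    have hexp_le_one : exp (-m ^ 4 * u) ≤ 1 :=
      exp_le_one_iff.2 (mul_nonpos_of_nonpos_of_nonneg (neg_nonpos.2 (by positivity)) hu.le)
    calc (m ^ 2 * exp (-m ^ 4 * u)) ^ 2 = m ^ 4 * (exp (-m ^ 4 * u) * exp (-m ^ 4 * u)) := by
          ring
      _ ≤ m ^ 4 * exp (-m ^ 4 * u) := by
          gcongr
          exact mul_le_of_le_one_left (exp_pos _).le hexp_le_one
  calc dgCoeff u x j ^ 2 = (m ^ 2 * exp (-m ^ 4 * u)) ^ 2 * phi (j + 1) x ^ 2 := by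
        rw [dgCoeff]; ring
    _ ≤ m ^ 4 * exp (-m ^ 4 * u) * (2 / π) :=
        mul_le_mul hdecay (sq_phi_le _ _) (sq_nonneg _) (by positivity)
    _ ≤ _ := by
        rw [mul_comm]
        exact mul_le_mul_of_nonneg_left (by exact_mod_cast hcoef) (by positivity)

lemma sq_integral_abs_DG_le {u : ℝ} (hu : 0 < u) (x : ℝ) :
    (∫ z in (0 : ℝ)..π, |DG u x z|) ^ 2 ≤ π * ∑' j, dgCoeff u x j ^ 2 := by
  have he : ∀ j, AEStronglyMeasurable (fun z => phi (j + 1) z) (volume.restrict (Ioc 0 π)) :=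
    fun j => (continuous_phi _).aestronglyMeasurable
  have horth : ∀ i j, ∫ z in Ioc 0 π, phi (i + 1) z * phi (j + 1) z
      = if i = j then 1 else 0 := fun i j => by
    rw [← intervalIntegral.integral_of_le pi_pos.le, integral_phi_succ_mul_phi_succ]
  have hvol : (volume.restrict (Ioc 0 π)).real univ = π := by
    simp [measureReal_def, pi_pos.le]
  simp_rw [intervalIntegral.integral_of_le pi_pos.le, DG_eq_tsum]
  have hcs := sq_integral_abs_le_mul_integral_sq
    (memLp_tsum_mul he (fun j => abs_phi_le (j + 1)) (summable_abs_dgCoeff hu x) 2)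
  rwa [hvol, integral_sq_tsum_mul_of_orthonormal he (fun j => abs_phi_le (j + 1)) horth
    (summable_abs_dgCoeff hu x)] at hcs

lemma exists_integral_abs_DG_le {ρ : ℝ} (hρ : 5 / 4 < ρ) :
    ∃ A > 0, ∀ u > 0, ∀ x, ∫ z in (0 : ℝ)..π, |DG u x z| ≤ A * u ^ (-(ρ / 2)) := by
  have hρ0 : 0 ≤ ρ := by linarith
  set K : ℝ := 1 + ((⌈ρ⌉₊)! : ℝ)
  have hZ := summable_nat_add_one_rpow (q := 4 - 4 * ρ) (by linarith)
  set Z := ∑' j : ℕ, ((j : ℝ) + 1) ^ (4 - 4 * ρ)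
  have hZ_pos : 0 < Z := hZ.tsum_pos (fun j => by positivity) 0 (by positivity)
  refine ⟨√(2 * K * Z), by positivity, fun u hu x => ?_⟩
  have hsq : (√(2 * K * Z) * u ^ (-(ρ / 2))) ^ 2 = π * (2 / π * (K * u ^ (-ρ) * Z)) := by
    rw [mul_pow, sq_sqrt (by positivity), ← rpow_mul_natCast hu.le]
    field_simp
    ring_nf
  have hsum : ∑' j, dgCoeff u x j ^ 2 ≤ 2 / π * (K * u ^ (-ρ) * Z) := by
    have hmajor := (hZ.mul_left (K * u ^ (-ρ))).mul_left (2 / π)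
    rw [← tsum_mul_left, ← tsum_mul_left]
    exact (hmajor.of_nonneg_of_le (fun j => sq_nonneg _) (sq_dgCoeff_le hu hρ0 x)).tsum_le_tsum
      (sq_dgCoeff_le hu hρ0 x) hmajor
  rw [← pow_le_pow_iff_left₀ (intervalIntegral.integral_nonneg pi_pos.le fun z _ => abs_nonneg _)
    (by positivity) two_ne_zero, hsq]
  exact (sq_integral_abs_DG_le hu x).trans (by gcongr)

theorem stmt6_general (T : ℝ) (ρ : ℝ) (hρ : ρ ∈ Set.Ioo (5 / 4 : ℝ) 2) :
    ∃ C : ℝ, 0 < C ∧ ∀ x ∈ Set.Icc (0 : ℝ) Real.pi, ∀ s t : ℝ, 0 ≤ s → s < t → t ≤ T →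
      (∫ r in s..t, ∫ z in (0 : ℝ)..Real.pi, |DG (t - r) x z|)
        ≤ C * (t - s) ^ (1 - ρ / 2) := by
  obtain ⟨A, hA, hDG⟩ := exists_integral_abs_DG_le hρ.1
  have hβ : ρ / 2 < 1 := by linarith [hρ.2]
  refine ⟨A / (1 - ρ / 2), div_pos hA (by linarith), fun x _ s t _ hst _ => ?_⟩
  exact intervalIntegral_le_of_le_rpow_sub hst.le hA.le hβ fun r hr =>
    hDG (t - r) (sub_pos.2 hr.2) x

/-- For every `ρ ∈ (5/4, 2)` there is `C = C(ρ,T) > 0` such that for all `x ∈ [0,π]`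
and `0 ≤ s < t ≤ T`, `∫_s^t ∫_0^π |ΔG_{t−r}(x,z)| dz dr ≤ C(t−s)^{1−ρ/2}`. -/
theorem stmt6 (T : ℝ) (hT : 0 < T) (ρ : ℝ) (hρ : ρ ∈ Set.Ioo (5 / 4 : ℝ) 2) :
    ∃ C : ℝ, 0 < C ∧ ∀ x ∈ Set.Icc (0 : ℝ) Real.pi, ∀ s t : ℝ, 0 ≤ s → s < t → t ≤ T →
      (∫ r in s..t, ∫ z in (0 : ℝ)..Real.pi, |DG (t - r) x z|)
        ≤ C * (t - s) ^ (1 - ρ / 2) :=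
  stmt6_general T ρ hρ
end

section
/- For every γ ∈ (0, 3/8) there exists a constant C_γ > 0 (depending only on γ and T, not on n) such that for every integer n ≥ 2, every x ∈ [0,π], and all 0 ≤ s < t ≤ T, ∫_0^s ∫_0^π |G^n_{t−r}(x,z) − G^n_{s−r}(x,z)|² dz dr + ∫_s^t ∫_0^π |G^n_{t−r}(x,z)|² dz dr ≤ C_γ |t−s|^{2γ}. -/
/-- `λ_{j,n} = −j²·c_{j,n}` with `c_{j,n} = sin²(jπ/(2n))/(jπ/(2n))²`. -/
noncomputable def lam (n j : ℕ) : ℝ :=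
  -((j : ℝ) ^ 2) * (Real.sin ((j : ℝ) * Real.pi / (2 * n)) ^ 2
    / ((j : ℝ) * Real.pi / (2 * n)) ^ 2)

/-- `κ_n(y) = h⌊y/h⌋` with `h = π/n`. -/
noncomputable def kappa (n : ℕ) (y : ℝ) : ℝ :=
  (Real.pi / n) * (⌊y / (Real.pi / n)⌋ : ℝ)

/-- Piecewise linear interpolant of `φ_j` on the grid `{kπ/n}`. -/
noncomputable def phiI (n j : ℕ) (x : ℝ) : ℝ :=
  phi j (kappa n x) + ((n : ℝ) * x / Real.pi - (⌊x / (Real.pi / n)⌋ : ℝ))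
    * (phi j (kappa n x + Real.pi / n) - phi j (kappa n x))

/-- Discrete Green function `G^n_t(x,y) = Σ_{j=1}^{n−1} e^{−λ_{j,n}²t} φ_{j,n}(x) φ_j(κ_n(y))`. -/
noncomputable def Gn (n : ℕ) (t x y : ℝ) : ℝ :=
  ∑ j ∈ Finset.Icc 1 (n - 1),
    Real.exp (-(lam n j) ^ 2 * t) * phiI n j x * phi j (kappa n y)

open Real Finset MeasureTheory

theorem sum_range_cos_int_mul_pi_div (n : ℕ) (d : ℤ) (hd : sin (d * π / (2 * n)) ≠ 0) :
    ∑ i ∈ range n, cos (d * π / n * i) = sin (d * π / 2) ^ 2 := by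
  have hn : (n : ℝ) ≠ 0 := by
    rintro h
    simp [h] at hd
  have hd' : sin (d * π / n / 2) ≠ 0 := by rwa [div_div, mul_comm (n : ℝ)]
  have key := sin_mul_sum_cos n (d * π / n) 0
  simp only [add_zero] at key
  have hsc : sin (d * π / 2) * cos (d * π / 2) = 0 := by
    have := sin_two_mul (d * π / 2)
    rw [show 2 * (d * π / 2) = d * π by ring, sin_int_mul_pi] at this
    linarith
  apply mul_left_cancel₀ hd'
  rw [key, show n * (d * π / n) / 2 = d * π / 2 by field_simp,
    show (n - 1) * (d * π / n) / 2 = d * π / 2 - d * π / n / 2 by field_simp, cos_sub]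
  linear_combination cos (d * π / n / 2) * hsc

theorem sin_int_mul_pi_div_ne_zero {n : ℕ} {d : ℤ} (hd₀ : d ≠ 0) (hd : |d| < 2 * n) :
    sin (d * π / (2 * n)) ≠ 0 := by
  have hn : (0 : ℝ) < 2 * n := by
    have : (0 : ℤ) < 2 * n := (abs_nonneg d).trans_lt hd
    exact_mod_cast this
  have hd' : |(d : ℝ)| < 2 * n := by exact_mod_cast hd
  rw [abs_lt] at hd'
  rw [Ne, sin_eq_zero_iff_of_lt_of_lt]
  · have : (d : ℝ) ≠ 0 := by exact_mod_cast hd₀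
    positivity
  · rw [lt_div_iff₀ hn]; nlinarith [pi_pos]
  · rw [div_lt_iff₀ hn]; nlinarith [pi_pos]

theorem sum_range_sin_mul_sin {n j k : ℕ} (hj₀ : 0 < j) (hj : j < n) (hk₀ : 0 < k) (hk : k < n) :
    ∑ i ∈ range n, sin (j * (i * (π / n))) * sin (k * (i * (π / n)))
      = if j = k then (n : ℝ) / 2 else 0 := by
  have hsum (d : ℤ) (hd₀ : d ≠ 0) (hd : |d| < 2 * n) :
      ∑ i ∈ range n, cos (d * (i * (π / n))) = sin (d * π / 2) ^ 2 := by
    rw [← sum_range_cos_int_mul_pi_div n d (sin_int_mul_pi_div_ne_zero hd₀ hd)]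
    refine sum_congr rfl fun i _ => ?_
    ring_nf
  have hprod (i : ℕ) : sin (j * (i * (π / n))) * sin (k * (i * (π / n)))
      = (cos (((j - k : ℤ) : ℝ) * (i * (π / n)))
          - cos (((j + k : ℤ) : ℝ) * (i * (π / n)))) / 2 := by
    push_cast
    rw [sub_mul, add_mul, cos_sub, cos_add]
    ring
  simp only [hprod, ← sum_div, sum_sub_distrib]
  rw [hsum (j + k) (by omega) (by rw [abs_lt]; omega)]
  split_ifs with hjk
  · subst hjk
    simp only [sub_self, Int.cast_zero, zero_mul, cos_zero, sum_const, card_range, nsmul_eq_mul,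
      mul_one]
    rw [show ((j + j : ℤ) : ℝ) * π / 2 = (j : ℤ) * π by push_cast; ring, sin_int_mul_pi]
    ring
  · rw [hsum (j - k) (by omega) (by rw [abs_lt]; omega)]
    -- `(j + k)π/2` and `(j - k)π/2` differ by `kπ`, so the two cosine sums cancel.
    have hshift : ((j + k : ℤ) : ℝ) * π / 2 = ((j - k : ℤ) : ℝ) * π / 2 + k * π := by
      push_cast; ring
    rw [hshift, sin_add_nat_mul_pi, mul_pow, ← pow_mul, mul_comm k, pow_mul, neg_one_sq, one_pow,
      one_mul, sub_self, zero_div]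

theorem mul_floor_div_eqOn_Ico {h : ℝ} (hh : 0 < h) (m : ℕ) :
    Set.EqOn (fun z => h * ⌊z / h⌋) (fun _ => m * h) (Set.Ico (m * h) ((m + 1) * h)) := by
  intro z ⟨hz₁, hz₂⟩
  have : ⌊z / h⌋ = m := by
    rw [Int.floor_eq_iff]
    push_cast
    exact ⟨(le_div_iff₀ hh).2 hz₁, (div_lt_iff₀ hh).2 hz₂⟩
  simp [this, mul_comm]

theorem intervalIntegrable_comp_mul_floor_div {h : ℝ} (hh : 0 < h) (m : ℕ) (F : ℝ → ℝ) :
    IntervalIntegrable (fun z => F (h * ⌊z / h⌋)) volume (m * h) ((m + 1) * h) := by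
  rw [intervalIntegrable_iff_integrableOn_Ico_of_le (by nlinarith)]
  exact (integrableOn_const (by simp)).congr_fun
    (fun z hz => congrArg F (mul_floor_div_eqOn_Ico hh m hz).symm) measurableSet_Ico

theorem integral_comp_mul_floor_div {h : ℝ} (hh : 0 < h) (m : ℕ) (F : ℝ → ℝ) :
    ∫ z in m * h..(m + 1) * h, F (h * ⌊z / h⌋) = h * F (m * h) := by
  have hle : m * h ≤ (m + 1) * h := by nlinarith
  rw [intervalIntegral.integral_of_le hle, integral_Ioc_eq_integral_Ioo,
    setIntegral_congr_fun measurableSet_Ioo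
      (fun z hz => congrArg F (mul_floor_div_eqOn_Ico hh m (Set.Ioo_subset_Ico_self hz))),
    setIntegral_const, Real.volume_real_Ioo_of_le hle, smul_eq_mul]
  ring

theorem integral_comp_kappa {n : ℕ} (hn : n ≠ 0) (F : ℝ → ℝ) :
    ∫ z in (0 : ℝ)..π, F (kappa n z) = π / n * ∑ m ∈ range n, F (m * (π / n)) := by
  have hh : 0 < π / n := by positivity
  have h := intervalIntegral.sum_integral_adjacent_intervals (a := fun m : ℕ => m * (π / n))
    (n := n) (f := fun z => F (kappa n z)) (μ := volume)
    (fun m _ => by exact_mod_cast intervalIntegrable_comp_mul_floor_div hh m F)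
  simp only [Nat.cast_zero, zero_mul, Nat.cast_succ] at h
  rw [mul_div_cancel₀ _ (by exact_mod_cast hn)] at h
  rw [← h, mul_sum]
  exact sum_congr rfl fun m _ => integral_comp_mul_floor_div hh m F

theorem phi_mul_phi (j k : ℕ) (y : ℝ) :
    phi j y * phi k y = 2 / π * (sin (j * y) * sin (k * y)) := by
  rw [phi, phi, mul_mul_mul_comm, mul_self_sqrt (by positivity)]

theorem integral_sq_sum_phi_kappa {n : ℕ} (b : ℕ → ℝ) :
    ∫ z in (0 : ℝ)..π, (∑ j ∈ Icc 1 (n - 1), b j * phi j (kappa n z)) ^ 2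
      = ∑ j ∈ Icc 1 (n - 1), b j ^ 2 := by
  rcases Nat.eq_zero_or_pos n with rfl | hn
  · simp
  rw [integral_comp_kappa hn.ne' (fun y => (∑ j ∈ Icc 1 (n - 1), b j * phi j y) ^ 2)]
  have horth : ∀ j ∈ Icc 1 (n - 1), ∀ k ∈ Icc 1 (n - 1),
      π / n * ∑ m ∈ range n, b j * phi j (m * (π / n)) * (b k * phi k (m * (π / n)))
        = if j = k then b j * b k else 0 := by
    intro j hj k hk
    rw [mem_Icc] at hj hk
    have hsin : ∑ m ∈ range n, b j * phi j (m * (π / n)) * (b k * phi k (m * (π / n)))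
        = b j * b k * (2 / π)
            * ∑ m ∈ range n, sin (j * (m * (π / n))) * sin (k * (m * (π / n))) := by
      rw [mul_sum]
      exact sum_congr rfl fun m _ => by rw [mul_mul_mul_comm, phi_mul_phi]; ring
    rw [hsin, sum_range_sin_mul_sin (by omega) (by omega) (by omega) (by omega)]
    split_ifs
    · field_simp
    · simp
  calc π / n * ∑ m ∈ range n, (∑ j ∈ Icc 1 (n - 1), b j * phi j (m * (π / n))) ^ 2
      = ∑ j ∈ Icc 1 (n - 1), ∑ k ∈ Icc 1 (n - 1),
          π / n * ∑ m ∈ range n, b j * phi j (m * (π / n)) * (b k * phi k (m * (π / n))) := by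
        simp_rw [sq, sum_mul_sum, mul_sum]
        rw [sum_comm]
        exact sum_congr rfl fun j _ => sum_comm
    _ = ∑ j ∈ Icc 1 (n - 1), ∑ k ∈ Icc 1 (n - 1), if j = k then b j * b k else 0 :=
        sum_congr rfl fun j hj => sum_congr rfl fun k hk => horth j hj k hk
    _ = ∑ j ∈ Icc 1 (n - 1), b j ^ 2 := sum_congr rfl fun j hj => by rw [sum_ite_eq, if_pos hj, sq]

theorem phi_sq_le (j : ℕ) (y : ℝ) : phi j y ^ 2 ≤ 2 / π := by
  rw [phi, mul_pow, sq_sqrt (by positivity)]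
  exact mul_le_of_le_one_right (by positivity) (sin_sq_le_one _)

theorem phiI_sq_le (n j : ℕ) (x : ℝ) : phiI n j x ^ 2 ≤ 2 / π := by
  have hf₀ := Int.fract_nonneg (x / (π / n))
  have hf₁ := (Int.fract_lt_one (x / (π / n))).le
  have hu := phi_sq_le j (kappa n x)
  have hv := phi_sq_le j (kappa n x + π / n)
  rw [phiI, show (n : ℝ) * x / π = x / (π / n) by rw [div_div_eq_mul_div, mul_comm],
    Int.self_sub_floor]
  generalize Int.fract (x / (π / n)) = f at *
  nlinarith [mul_nonneg (mul_nonneg hf₀ (sub_nonneg.2 hf₁))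
    (sq_nonneg (phi j (kappa n x) - phi j (kappa n x + π / n)))]

theorem four_div_pi_sq_le_sin_sq_div_sq {θ : ℝ} (hθ₀ : 0 < θ) (hθ : θ ≤ π / 2) :
    4 / π ^ 2 ≤ sin θ ^ 2 / θ ^ 2 := by
  have h := mul_le_sin hθ₀.le hθ
  rw [le_div_iff₀ (by positivity), show 4 / π ^ 2 * θ ^ 2 = (2 / π * θ) ^ 2 by ring]
  exact pow_le_pow_left₀ (by positivity) h 2

theorem pow_four_le_lam_sq {n j : ℕ} (hj₀ : 0 < j) (hj : j ≤ n) :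
    (4 / π ^ 2) ^ 2 * (j : ℝ) ^ 4 ≤ lam n j ^ 2 := by
  have hn : (0 : ℝ) < n := by exact_mod_cast hj₀.trans_le hj
  have hθ : (j : ℝ) * π / (2 * n) ≤ π / 2 := by
    rw [div_le_div_iff₀ (by positivity) two_pos]
    have : (j : ℝ) ≤ n := by exact_mod_cast hj
    nlinarith [pi_pos]
  have h := four_div_pi_sq_le_sin_sq_div_sq (by positivity) hθ
  rw [lam, mul_pow, neg_sq, ← pow_mul, mul_comm]
  gcongr

theorem one_sub_exp_neg_le_rpow {a p : ℝ} (ha : 0 ≤ a) (hp₀ : 0 < p) (hp₁ : p ≤ 1) :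
    1 - exp (-a) ≤ a ^ p := by
  rcases le_or_gt a 1 with h | h
  · calc 1 - exp (-a) ≤ a := by linarith [add_one_le_exp (-a)]
      _ ≤ a ^ p := by simpa using rpow_le_rpow_of_exponent_ge' ha h hp₀.le hp₁
  · calc 1 - exp (-a) ≤ 1 := by linarith [exp_pos (-a)]
      _ ≤ a ^ p := one_le_rpow h.le hp₀.le

theorem one_sub_exp_neg_two_mul_le {L τ p : ℝ} (hL : 0 ≤ L) (hτ : 0 ≤ τ) (hp₀ : 0 < p)
    (hp₁ : p ≤ 1) : 1 - exp (-(2 * L) * τ) ≤ 2 * L ^ p * τ ^ p :=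
  calc 1 - exp (-(2 * L) * τ) ≤ (2 * L * τ) ^ p := by
        rw [neg_mul]; exact one_sub_exp_neg_le_rpow (by positivity) hp₀ hp₁
    _ = 2 ^ p * L ^ p * τ ^ p := by rw [mul_rpow (by positivity) hτ, mul_rpow zero_le_two hL]
    _ ≤ 2 * L ^ p * τ ^ p := by
        gcongr
        simpa using rpow_le_rpow_of_exponent_le one_le_two hp₁

theorem integral_exp_neg_mul_sub {c : ℝ} (hc : c ≠ 0) (A u v : ℝ) :
    ∫ r in u..v, exp (-c * (A - r)) = (exp (-c * (A - v)) - exp (-c * (A - u))) / c := by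
  have hderiv (r : ℝ) : HasDerivAt (fun r => exp (-c * (A - r)) / c) (exp (-c * (A - r))) r := by
    refine ((((hasDerivAt_id' r).const_sub A).const_mul (-c)).exp.div_const c).congr_deriv ?_
    field_simp
  rw [intervalIntegral.integral_eq_sub_of_hasDerivAt (fun r _ => hderiv r)
    ((by fun_prop : Continuous _).intervalIntegrable _ _), sub_div]

theorem integral_sq_exp_mode_le (a : ℝ) {L s t p : ℝ} (hL : 0 < L) (hs : 0 ≤ s) (hst : s ≤ t)
    (hp₀ : 0 < p) (hp₁ : p ≤ 1) :
    (∫ r in (0 : ℝ)..s, (exp (-L * (t - r)) * a - exp (-L * (s - r)) * a) ^ 2)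
      + ∫ r in s..t, (exp (-L * (t - r)) * a) ^ 2 ≤ 2 * a ^ 2 * L ^ (p - 1) * (t - s) ^ p := by
  set E := exp (-(L * (t - s)))
  have hE₀ : 0 < E := exp_pos _
  have hE₁ : E ≤ 1 := exp_le_one_iff.2 (by nlinarith)
  have hE_sq : E ^ 2 = exp (-(2 * L) * (t - s)) := by rw [← exp_nat_mul]; ring_nf
  have hsq (u : ℝ) : exp (-L * u) ^ 2 = exp (-(2 * L) * u) := by rw [← exp_nat_mul]; ring_nf
  have hI₁ : ∫ r in (0 : ℝ)..s, (exp (-L * (t - r)) * a - exp (-L * (s - r)) * a) ^ 2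
      = a ^ 2 * (1 - E) ^ 2 * ((1 - exp (-(2 * L) * s)) / (2 * L)) := by
    have hsplit (r : ℝ) : exp (-L * (t - r)) = E * exp (-L * (s - r)) := by
      rw [← exp_add]; ring_nf
    simp_rw [hsplit, show ∀ r, (E * exp (-L * (s - r)) * a - exp (-L * (s - r)) * a) ^ 2
      = a ^ 2 * (1 - E) ^ 2 * exp (-L * (s - r)) ^ 2 from fun r => by ring, hsq,
      intervalIntegral.integral_const_mul, integral_exp_neg_mul_sub (by positivity : 2 * L ≠ 0)]
    simp
  have hI₂ : ∫ r in s..t, (exp (-L * (t - r)) * a) ^ 2 = a ^ 2 * ((1 - E ^ 2) / (2 * L)) := by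
    simp_rw [mul_pow, hsq, intervalIntegral.integral_mul_const,
      integral_exp_neg_mul_sub (by positivity : 2 * L ≠ 0), ← hE_sq]
    simp only [sub_self, mul_zero, exp_zero]
    ring
  have hdecay : 1 - E ^ 2 ≤ 2 * L ^ p * (t - s) ^ p := by
    rw [hE_sq]; exact one_sub_exp_neg_two_mul_le hL.le (sub_nonneg.2 hst) hp₀ hp₁
  have hexp : 0 ≤ 1 - exp (-(2 * L) * s) := by
    rw [sub_nonneg, exp_le_one_iff]; nlinarith
  have hE_bound : (1 - E) ^ 2 * (1 - exp (-(2 * L) * s)) ≤ 1 - E ^ 2 := by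
    nlinarith [exp_pos (-(2 * L) * s)]
  rw [hI₁, hI₂, rpow_sub_one hL.ne']
  calc a ^ 2 * (1 - E) ^ 2 * ((1 - exp (-(2 * L) * s)) / (2 * L)) + a ^ 2 * ((1 - E ^ 2) / (2 * L))
      ≤ a ^ 2 * ((1 - E ^ 2) / (2 * L)) + a ^ 2 * ((1 - E ^ 2) / (2 * L)) := by
        rw [← mul_div_assoc, mul_assoc, mul_div_assoc]
        gcongr
    _ = a ^ 2 * (1 - E ^ 2) / L := by field_simp; ring
    _ ≤ a ^ 2 * (2 * L ^ p * (t - s) ^ p) / L := by gcongr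
    _ = 2 * a ^ 2 * (L ^ p / L) * (t - s) ^ p := by ring

theorem rpow_lam_sq_le {n j : ℕ} (hj₀ : 0 < j) (hj : j ≤ n) {p : ℝ} (hp : p ≤ 1) :
    (lam n j ^ 2) ^ (p - 1) ≤ ((4 / π ^ 2) ^ 2) ^ (p - 1) * (j : ℝ) ^ (4 * (p - 1)) := by
  have hj' : (0 : ℝ) < j := by exact_mod_cast hj₀
  rw [rpow_mul hj'.le, rpow_ofNat, ← mul_rpow (by positivity) (by positivity)]
  exact rpow_le_rpow_of_nonpos (by positivity) (by exact_mod_cast pow_four_le_lam_sq hj₀ hj)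
    (by linarith)

theorem integral_sq_abs_sub_Gn (n : ℕ) (t s x : ℝ) :
    ∫ z in (0 : ℝ)..π, |Gn n t x z - Gn n s x z| ^ 2
      = ∑ j ∈ Icc 1 (n - 1),
          (exp (-lam n j ^ 2 * t) * phiI n j x - exp (-lam n j ^ 2 * s) * phiI n j x) ^ 2 := by
  simp_rw [sq_abs, Gn, ← sum_sub_distrib, ← sub_mul]
  exact integral_sq_sum_phi_kappa _

theorem integral_sq_abs_Gn (n : ℕ) (t x : ℝ) :
    ∫ z in (0 : ℝ)..π, |Gn n t x z| ^ 2
      = ∑ j ∈ Icc 1 (n - 1), (exp (-lam n j ^ 2 * t) * phiI n j x) ^ 2 := by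
  simp_rw [sq_abs]
  exact integral_sq_sum_phi_kappa _

theorem Gn_energy_le (n : ℕ) (x : ℝ) {s t p : ℝ} (hs : 0 ≤ s) (hst : s ≤ t) (hp₀ : 0 < p)
    (hp₁ : p ≤ 1) :
    (∫ r in (0 : ℝ)..s, ∫ z in (0 : ℝ)..π, |Gn n (t - r) x z - Gn n (s - r) x z| ^ 2)
      + (∫ r in s..t, ∫ z in (0 : ℝ)..π, |Gn n (t - r) x z| ^ 2)
      ≤ 4 / π * ((4 / π ^ 2) ^ 2) ^ (p - 1) * (∑ j ∈ Icc 1 (n - 1), (j : ℝ) ^ (4 * (p - 1)))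
          * (t - s) ^ p := by
  simp_rw [integral_sq_abs_sub_Gn, integral_sq_abs_Gn]
  rw [intervalIntegral.integral_finsetSum
      fun _ _ => (by fun_prop : Continuous _).intervalIntegrable _ _,
    intervalIntegral.integral_finsetSum
      fun _ _ => (by fun_prop : Continuous _).intervalIntegrable _ _,
    ← sum_add_distrib, mul_sum, sum_mul]
  refine sum_le_sum fun j hj => ?_
  obtain ⟨hj₀, hj⟩ : 0 < j ∧ j ≤ n := by rw [mem_Icc] at hj; omega
  have hL : 0 < lam n j ^ 2 := lt_of_lt_of_le (by positivity) (pow_four_le_lam_sq hj₀ hj)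
  calc _ ≤ 2 * phiI n j x ^ 2 * (lam n j ^ 2) ^ (p - 1) * (t - s) ^ p :=
        integral_sq_exp_mode_le _ hL hs hst hp₀ hp₁
    _ ≤ 2 * (2 / π) * (((4 / π ^ 2) ^ 2) ^ (p - 1) * (j : ℝ) ^ (4 * (p - 1))) * (t - s) ^ p := by
        have := rpow_lam_sq_le hj₀ hj hp₁
        gcongr
        exact phiI_sq_le n j x
    _ = _ := by ring

theorem stmt12_general (T : ℝ) (γ : ℝ) (hγ : γ ∈ Set.Ioo (0 : ℝ) (3 / 8)) :
    ∃ C : ℝ, 0 < C ∧ ∀ n : ℕ, 2 ≤ n → ∀ x ∈ Set.Icc (0 : ℝ) Real.pi,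
      ∀ s t : ℝ, 0 ≤ s → s < t → t ≤ T →
      (∫ r in (0 : ℝ)..s, ∫ z in (0 : ℝ)..Real.pi,
          |Gn n (t - r) x z - Gn n (s - r) x z| ^ 2)
        + (∫ r in s..t, ∫ z in (0 : ℝ)..Real.pi, |Gn n (t - r) x z| ^ 2)
      ≤ C * |t - s| ^ (2 * γ) := by
  obtain ⟨hγ₀, hγ₁⟩ := hγ
  have hsum : Summable fun j : ℕ => (j : ℝ) ^ (4 * (2 * γ - 1)) :=
    summable_nat_rpow.2 (by linarith)
  have hterm (j : ℕ) : 0 ≤ (j : ℝ) ^ (4 * (2 * γ - 1)) := by positivity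
  have hS : 0 < ∑' j : ℕ, (j : ℝ) ^ (4 * (2 * γ - 1)) := hsum.tsum_pos hterm 1 (by simp)
  refine ⟨4 / π * ((4 / π ^ 2) ^ 2) ^ (2 * γ - 1) * ∑' j : ℕ, (j : ℝ) ^ (4 * (2 * γ - 1)),
    by positivity, fun n _ x _ s t hs hst _ => ?_⟩
  rw [abs_of_pos (sub_pos.2 hst)]
  refine (Gn_energy_le (p := 2 * γ) n x hs hst.le (by linarith) (by linarith)).trans ?_
  gcongr 4 / π * ((4 / π ^ 2) ^ 2) ^ (2 * γ - 1) * ?_ * _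
  exact hsum.sum_le_tsum _ fun j _ => hterm j

/-- For every `γ ∈ (0, 3/8)` there is `C_γ > 0` (independent of `n`) such that for every
`n ≥ 2`, `x ∈ [0,π]`, `0 ≤ s < t ≤ T`:
`∫_0^s ∫_0^π |G^n_{t−r}(x,z) − G^n_{s−r}(x,z)|² dz dr + ∫_s^t ∫_0^π |G^n_{t−r}(x,z)|² dz dr
 ≤ C_γ |t−s|^{2γ}`. -/
theorem stmt12 (T : ℝ) (hT : 0 < T) (γ : ℝ) (hγ : γ ∈ Set.Ioo (0 : ℝ) (3 / 8)) :
    ∃ C : ℝ, 0 < C ∧ ∀ n : ℕ, 2 ≤ n → ∀ x ∈ Set.Icc (0 : ℝ) Real.pi,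
      ∀ s t : ℝ, 0 ≤ s → s < t → t ≤ T →
      (∫ r in (0 : ℝ)..s, ∫ z in (0 : ℝ)..Real.pi,
          |Gn n (t - r) x z - Gn n (s - r) x z| ^ 2)
        + (∫ r in s..t, ∫ z in (0 : ℝ)..Real.pi, |Gn n (t - r) x z| ^ 2)
      ≤ C * |t - s| ^ (2 * γ) :=
  stmt12_general T γ hγ
end
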